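/- Let g ∈ L²(ℝ) be a window function, let s > 0, and let c : ℤ → ℂ be a finitely supported sequence. Define f = Σ_{k∈ℤ} c_k T_{sk}(Rg) and f_× = Σ_{k∈ℤ} conj(c_k) T_{sk}(Rg) (finite sums in L²(ℝ)). Then |V_g f(x, n/s)| = |V_g f_×(x, n/s)| for every x ∈ ℝ and every n ∈ ℤ; that is, the spectrograms of f and f_× agree pointwise on the parallel lines ℝ × (1/s)ℤ. -/

import Mathlib

open MeasureTheory Complex Real

/-- The short-time Fourier transform of `f ∈ L²(ℝ)` with respect to the window `g ∈ L²(ℝ)`: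
`V_g f (x, ω) = ∫ f(t) conj(g(t-x)) e^{-2πiωt} dt`. -/
noncomputable def STFT (g f : Lp ℂ 2 (volume : Measure ℝ)) (x ω : ℝ) : ℂ :=
  ∫ t : ℝ, f t * (starRingEnd ℂ) (g (t - x)) * Complex.exp (-2 * Real.pi * Complex.I * ω * t)

/-- `f` and `h` agree up to a global phase: `f = ν • h` for some unimodular `ν ∈ ℂ`. -/
def SamePhase (f h : Lp ℂ 2 (volume : Measure ℝ)) : Prop :=
  ∃ ν : ℂ, ‖ν‖ = 1 ∧ f = ν • h

/-- Translation operator `T_τ` on `L²(ℝ)`: `(T_τ f)(t) = f (t - τ)`. -/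
noncomputable def Translate (τ : ℝ) (f : Lp ℂ 2 (volume : Measure ℝ)) :
    Lp ℂ 2 (volume : Measure ℝ) :=
  Lp.compMeasurePreserving (fun t => t - τ) (measurePreserving_sub_right volume τ) f

/-- Reflection operator on `L²(ℝ)`: `(R f)(t) = f (-t)`. -/
noncomputable def Reflect (f : Lp ℂ 2 (volume : Measure ℝ)) : Lp ℂ 2 (volume : Measure ℝ) :=
  Lp.compMeasurePreserving (fun t => -t) (Measure.measurePreserving_neg volume) f

/-!
`V_g f` is linear in `f`, and for `h = T_τ R g` the substitution `t ↦ x + τ - t` in the STFT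
integral gives `conj (V_g h (x, ω)) = e^{2πiω(x+τ)} V_g h (x, ω)`. For `τ = sk` and `ω = n/s`
the factor `e^{2πiωτ}` is `1`, so `conj (V_g f (x, n/s)) = e^{2πinx/s} V_g f_× (x, n/s)`, and
the two moduli agree.
-/

open ComplexConjugate

local notation "L²" => Lp ℂ 2 (volume : Measure ℝ)

theorem coeFn_translate (τ : ℝ) (f : L²) : Translate τ f =ᵐ[volume] fun t => f (t - τ) :=
  Lp.coeFn_compMeasurePreserving f _

theorem coeFn_reflect (f : L²) : Reflect f =ᵐ[volume] fun t => f (-t) :=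
  Lp.coeFn_compMeasurePreserving f _

theorem coeFn_translate_reflect (τ : ℝ) (g : L²) :
    Translate τ (Reflect g) =ᵐ[volume] fun t => g (τ - t) := by
  have hreflect : (Reflect g ∘ fun t => t - τ) =ᵐ[volume] fun t => g (-(t - τ)) :=
    (measurePreserving_sub_right volume τ).quasiMeasurePreserving.ae_eq_comp (coeFn_reflect g)
  filter_upwards [coeFn_translate τ (Reflect g), hreflect] with t h₁ h₂
  exact h₁.trans (h₂.trans (by rw [neg_sub]))

theorem norm_exp_two_pi_I_mul (a b : ℝ) : ‖exp (2 * π * I * a * b)‖ = 1 := by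
  rw [show 2 * π * I * a * b = ((2 * π * a * b : ℝ) : ℂ) * I by push_cast; ring,
    norm_exp_ofReal_mul_I]

theorem integrable_stft_integrand (g f : L²) (x ω : ℝ) :
    Integrable (fun t : ℝ => f t * conj (g (t - x)) * exp (-2 * π * I * ω * t)) := by
  have hwindow : MemLp (fun t => conj (g (t - x))) 2 :=
    ((Lp.memLp (Translate x g)).ae_eq (coeFn_translate x g)).star
  refine ((Lp.memLp f).integrable_mul hwindow).mul_bdd ?_ (c := 1) ?_
  · fun_prop
  · filter_upwards with t
    rw [show -2 * π * I * ω * t = 2 * π * I * (-ω : ℝ) * t by push_cast; ring]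
    exact (norm_exp_two_pi_I_mul _ _).le

theorem stft_add (g f h : L²) (x ω : ℝ) : STFT g (f + h) x ω = STFT g f x ω + STFT g h x ω := by
  rw [STFT, STFT, STFT, ← integral_add (integrable_stft_integrand g f x ω)
    (integrable_stft_integrand g h x ω)]
  refine integral_congr_ae ?_
  filter_upwards [Lp.coeFn_add f h] with t ht
  rw [ht, Pi.add_apply]
  ring

theorem stft_smul (g f : L²) (a : ℂ) (x ω : ℝ) : STFT g (a • f) x ω = a * STFT g f x ω := by
  rw [STFT, STFT, ← integral_const_mul]
  refine integral_congr_ae ?_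
  filter_upwards [Lp.coeFn_smul a f] with t ht
  rw [ht, Pi.smul_apply, smul_eq_mul]
  ring

noncomputable def stftLinearMap (g : L²) (x ω : ℝ) : L² →ₗ[ℂ] ℂ where
  toFun f := STFT g f x ω
  map_add' f h := stft_add g f h x ω
  map_smul' a f := stft_smul g f a x ω

theorem stft_sum_smul {ι : Type*} (g : L²) (S : Finset ι) (a : ι → ℂ) (F : ι → L²) (x ω : ℝ) :
    STFT g (∑ k ∈ S, a k • F k) x ω = ∑ k ∈ S, a k * STFT g (F k) x ω := by
  change stftLinearMap g x ω _ = ∑ k ∈ S, a k * stftLinearMap g x ω (F k)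
  simp only [map_sum, map_smul, smul_eq_mul]

theorem conj_stft_translate_reflect (g : L²) (τ x ω : ℝ) :
    conj (STFT g (Translate τ (Reflect g)) x ω) =
      exp (2 * π * I * ω * (x + τ)) * STFT g (Translate τ (Reflect g)) x ω := by
  have hrepr : STFT g (Translate τ (Reflect g)) x ω =
      ∫ t, g (τ - t) * conj (g (t - x)) * exp (-2 * π * I * ω * t) :=
    integral_congr_ae <| by filter_upwards [coeFn_translate_reflect τ g] with t ht; rw [ht]
  rw [hrepr, ← integral_conj, ← integral_const_mul, ← integral_sub_left_eq_self _ volume (x + τ)]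
  refine integral_congr_ae (.of_forall fun u => ?_)
  simp only [map_mul, conj_conj, ← exp_conj, map_neg, map_ofNat, conj_ofReal, conj_I]
  rw [show τ - (x + τ - u) = u - x by ring, show x + τ - u - x = τ - u by ring,
    show -2 * π * -I * ω * ((x + τ - u : ℝ) : ℂ) = 2 * π * I * ω * (x + τ) + -2 * π * I * ω * u by
      push_cast; ring, Complex.exp_add]
  ring

theorem exp_two_pi_I_mul_add_of_mul_eq_int {ω τ : ℝ} {m : ℤ} (h : ω * τ = m) (x : ℝ) :
    exp (2 * π * I * ω * (x + τ)) = exp (2 * π * I * ω * x) := by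
  have h' : (ω : ℂ) * τ = m := by exact_mod_cast h
  rw [show 2 * π * I * ω * (x + τ) = 2 * π * I * ω * x + m * (2 * π * I) by
    linear_combination (2 * π * I) * h', Complex.exp_add, exp_int_mul_two_pi_mul_I, mul_one]

theorem norm_stft_sum_translate_reflect_conj {ι : Type*} (g : L²) (S : Finset ι) (a : ι → ℂ)
    (τ : ι → ℝ) (x ω : ℝ) (hτ : ∀ k ∈ S, ∃ m : ℤ, ω * τ k = m) :
    ‖STFT g (∑ k ∈ S, a k • Translate (τ k) (Reflect g)) x ω‖ =
      ‖STFT g (∑ k ∈ S, conj (a k) • Translate (τ k) (Reflect g)) x ω‖ := by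
  have hconj : conj (STFT g (∑ k ∈ S, a k • Translate (τ k) (Reflect g)) x ω) =
      exp (2 * π * I * ω * x) *
        STFT g (∑ k ∈ S, conj (a k) • Translate (τ k) (Reflect g)) x ω := by
    simp only [stft_sum_smul, map_sum, Finset.mul_sum, map_mul, conj_stft_translate_reflect]
    refine Finset.sum_congr rfl fun k hk => ?_
    obtain ⟨m, hm⟩ := hτ k hk
    rw [exp_two_pi_I_mul_add_of_mul_eq_int hm]
    ring
  rw [← norm_conj, hconj, norm_mul, norm_exp_two_pi_I_mul, one_mul]

/-- If `f = ∑ₖ cₖ T_{sk}(Rg)` and `f_× = ∑ₖ conj(cₖ) T_{sk}(Rg)` for a finitely supported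
sequence `c`, then the spectrograms of `f` and `f_×` with window `g` agree pointwise on the
parallel lines `ℝ × (1/s)ℤ`. -/
theorem stmt5 (g : Lp ℂ 2 (volume : Measure ℝ)) (s : ℝ) (hs : 0 < s) (c : ℤ →₀ ℂ) :
    ∀ x : ℝ, ∀ n : ℤ,
      ‖STFT g (∑ k ∈ c.support, c k • Translate (s * k) (Reflect g)) x (n / s)‖ =
      ‖STFT g
        (∑ k ∈ c.support, (starRingEnd ℂ) (c k) • Translate (s * k) (Reflect g)) x (n / s)‖ :=
  fun x n => norm_stft_sum_translate_reflect_conj g c.support c (fun k => s * k) x (n / s)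
    fun k _ => ⟨n * k, by push_cast; field_simp [hs.ne']⟩
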